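/- arXiv:1205.4340 — 2 statements merged into one kernel-verified Lean document; each statement's English description precedes it below -/
import Mathlib

section
/- For every integer n ≥ 1 and 1 ≤ k ≤ n, the following finite identity of rational functions in q holds: ∑_{j=0}^{k-1} (-1)^j (-q;q²)_j (-q^{-1};q²)_{n-j} q^{n-j} / ((q²;q²)_j (q²;q²)_{n-j}) = (-1)^{k-1} (-q;q²)_k (-q;q²)_{n-k} q^{n-k} / ((1-q^{2n})(q²;q²)_{n-k} (q²;q²)_{k-1}). -/
/-!
Write `R k` for the right-hand side as a function of `k`. It is the `k`-th partial sum in closed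
form, so the identity telescopes: `R 1` is the first summand, and for `n = k + m + 1` the difference
`R (k + 1) - R k` is the `k`-th summand. Using `(-q⁻¹; q²)_{m+1} = (1 + q⁻¹) (-q; q²)_m` and
splitting off the last factor of each q-Pochhammer symbol, that difference reduces to the
polynomial identity
`(1 + q^(2k+1)) (1 - q^(2m+2)) + q (1 - q^(2k)) (1 + q^(2m+1)) = (1 + q) (1 - q^(2n))`.
-/

/-- finite q-Pochhammer symbol `(a;q)_m` in the field of rational functions -/
noncomputable def qPoch (a q : RatFunc ℚ) (m : ℕ) : RatFunc ℚ := ∏ i ∈ Finset.range m, (1 - a * q ^ i)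

lemma qPoch_zero (a q : RatFunc ℚ) : qPoch a q 0 = 1 := Finset.prod_range_zero _

lemma qPoch_succ (a q : RatFunc ℚ) (m : ℕ) :
    qPoch a q (m + 1) = qPoch a q m * (1 - a * q ^ m) :=
  Finset.prod_range_succ _ _

lemma qPoch_neg_inv_sq_succ (q : RatFunc ℚ) (m : ℕ) :
    qPoch (-q⁻¹) (q ^ 2) (m + 1) = (1 + q⁻¹) * qPoch (-q) (q ^ 2) m := by
  rw [qPoch, qPoch, Finset.prod_range_succ', mul_comm]
  congr 1
  · ring
  · refine Finset.prod_congr rfl fun i _ ↦ ?_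
    rcases eq_or_ne q 0 with rfl | hq
    · simp
    · field_simp
      ring

lemma triangular_telescoping_identity {R : Type*} [CommRing R] (q : R) (k m : ℕ) :
    (1 + q ^ (2 * k + 1)) * (1 - q ^ (2 * m + 2)) + q * (1 - q ^ (2 * k)) * (1 + q ^ (2 * m + 1)) =
      (1 + q) * (1 - q ^ (2 * (k + m + 1))) := by
  ring

lemma RatFunc.X_pow_ne_one {K : Type*} [Field K] {i : ℕ} (hi : i ≠ 0) :
    (RatFunc.X : RatFunc K) ^ i ≠ 1 := fun h ↦ by
  have hdeg := congrArg RatFunc.intDegree h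
  rw [← RatFunc.algebraMap_X, ← map_pow, RatFunc.intDegree_polynomial, RatFunc.intDegree_one,
    Polynomial.natDegree_X_pow] at hdeg
  omega

section Triangular

variable (q : RatFunc ℚ)

noncomputable def triangularTerm (n j : ℕ) : RatFunc ℚ :=
  (-1) ^ j * qPoch (-q) (q ^ 2) j * qPoch (-q⁻¹) (q ^ 2) (n - j) * q ^ (n - j) /
    (qPoch (q ^ 2) (q ^ 2) j * qPoch (q ^ 2) (q ^ 2) (n - j))

noncomputable def triangularPartialSum (n k : ℕ) : RatFunc ℚ :=
  (-1) ^ (k - 1) * qPoch (-q) (q ^ 2) k * qPoch (-q) (q ^ 2) (n - k) * q ^ (n - k) /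
    ((1 - q ^ (2 * n)) * qPoch (q ^ 2) (q ^ 2) (n - k) * qPoch (q ^ 2) (q ^ 2) (k - 1))

variable {q}

lemma one_sub_pow_ne_zero (hq : ∀ i ≠ 0, q ^ i ≠ 1) {i : ℕ} (hi : i ≠ 0) : 1 - q ^ i ≠ 0 :=
  sub_ne_zero.2 (hq i hi).symm

lemma one_sub_sq_mul_sq_pow_ne_zero (hq : ∀ i ≠ 0, q ^ i ≠ 1) (i : ℕ) :
    1 - q ^ 2 * (q ^ 2) ^ i ≠ 0 := by
  rw [← pow_succ', ← pow_mul]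
  exact one_sub_pow_ne_zero hq (by positivity)

lemma qPoch_sq_sq_ne_zero (hq : ∀ i ≠ 0, q ^ i ≠ 1) (m : ℕ) : qPoch (q ^ 2) (q ^ 2) m ≠ 0 :=
  Finset.prod_ne_zero_iff.2 fun i _ ↦ one_sub_sq_mul_sq_pow_ne_zero hq i

lemma triangularTerm_zero (hq₀ : q ≠ 0) (hq : ∀ i ≠ 0, q ^ i ≠ 1) (m : ℕ) :
    triangularTerm q (m + 1) 0 = triangularPartialSum q (m + 1) 1 := by
  have := one_sub_sq_mul_sq_pow_ne_zero hq m
  have := qPoch_sq_sq_ne_zero hq m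
  have := one_sub_pow_ne_zero hq (i := 2 * (m + 1)) (by positivity)
  rw [triangularTerm, triangularPartialSum, Nat.sub_zero, Nat.add_sub_cancel, Nat.sub_self,
    qPoch_neg_inv_sq_succ, qPoch_succ (q ^ 2) _ m, qPoch_succ (-q) _ 0]
  simp only [qPoch_zero, pow_zero]
  field_simp
  ring

lemma triangularPartialSum_add_triangularTerm (hq₀ : q ≠ 0) (hq : ∀ i ≠ 0, q ^ i ≠ 1) (l m : ℕ) :
    triangularPartialSum q (l + m + 2) (l + 1) + triangularTerm q (l + m + 2) (l + 1) =
      triangularPartialSum q (l + m + 2) (l + 2) := by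
  have := one_sub_sq_mul_sq_pow_ne_zero hq m
  have := one_sub_sq_mul_sq_pow_ne_zero hq l
  have := qPoch_sq_sq_ne_zero hq m
  have := qPoch_sq_sq_ne_zero hq l
  have := one_sub_pow_ne_zero hq (i := 2 * (l + m + 2)) (by positivity)
  rw [triangularTerm, triangularPartialSum, triangularPartialSum, Nat.add_sub_cancel,
    show l + m + 2 - (l + 1) = m + 1 by omega, show l + m + 2 - (l + 2) = m by omega,
    show l + 2 - 1 = l + 1 by omega, qPoch_neg_inv_sq_succ, qPoch_succ (-q) _ m,
    qPoch_succ (-q) _ (l + 1), qPoch_succ (q ^ 2) _ m, qPoch_succ (q ^ 2) _ l,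
    pow_succ (-1 : RatFunc ℚ) l]
  field_simp
  linear_combination qPoch (-q) (q ^ 2) (l + 1) * qPoch (-q) (q ^ 2) m * q ^ (m + 1) *
    triangular_telescoping_identity q (l + 1) m

theorem sum_range_triangularTerm (hq₀ : q ≠ 0) (hq : ∀ i ≠ 0, q ^ i ≠ 1) {n k : ℕ}
    (hk1 : 1 ≤ k) (hk : k ≤ n) :
    ∑ j ∈ Finset.range k, triangularTerm q n j = triangularPartialSum q n k := by
  induction k, hk1 using Nat.le_induction with
  | base =>
    obtain ⟨m, rfl⟩ : ∃ m, n = m + 1 := ⟨n - 1, by omega⟩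
    rw [Finset.sum_range_one, triangularTerm_zero hq₀ hq]
  | succ k hk1 ih =>
    obtain ⟨l, rfl⟩ : ∃ l, k = l + 1 := ⟨k - 1, by omega⟩
    obtain ⟨m, rfl⟩ : ∃ m, n = l + m + 2 := ⟨n - (l + 2), by omega⟩
    rw [Finset.sum_range_succ, ih (by omega), triangularPartialSum_add_triangularTerm hq₀ hq]

end Triangular

theorem key_induction_lemma_triangular_general (n k : ℕ) (hk1 : 1 ≤ k) (hk : k ≤ n) :
    (∑ j ∈ Finset.range k, (-1 : RatFunc ℚ) ^ j *
        qPoch (-RatFunc.X) (RatFunc.X ^ 2) j * qPoch (-RatFunc.X⁻¹) (RatFunc.X ^ 2) (n - j) *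
          RatFunc.X ^ (n - j) /
            (qPoch (RatFunc.X ^ 2) (RatFunc.X ^ 2) j *
              qPoch (RatFunc.X ^ 2) (RatFunc.X ^ 2) (n - j))) =
    (-1 : RatFunc ℚ) ^ (k - 1) * qPoch (-RatFunc.X) (RatFunc.X ^ 2) k *
        qPoch (-RatFunc.X) (RatFunc.X ^ 2) (n - k) * RatFunc.X ^ (n - k) /
      ((1 - RatFunc.X ^ (2 * n)) * qPoch (RatFunc.X ^ 2) (RatFunc.X ^ 2) (n - k) *
        qPoch (RatFunc.X ^ 2) (RatFunc.X ^ 2) (k - 1)) :=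
  sum_range_triangularTerm RatFunc.X_ne_zero (fun _ ↦ RatFunc.X_pow_ne_one) hk1 hk

theorem key_induction_lemma_triangular (n k : ℕ) (hn : 1 ≤ n) (hk1 : 1 ≤ k) (hk : k ≤ n) :
    (∑ j ∈ Finset.range k, (-1 : RatFunc ℚ) ^ j *
        qPoch (-RatFunc.X) (RatFunc.X ^ 2) j * qPoch (-RatFunc.X⁻¹) (RatFunc.X ^ 2) (n - j) *
          RatFunc.X ^ (n - j) /
            (qPoch (RatFunc.X ^ 2) (RatFunc.X ^ 2) j *
              qPoch (RatFunc.X ^ 2) (RatFunc.X ^ 2) (n - j))) =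
    (-1 : RatFunc ℚ) ^ (k - 1) * qPoch (-RatFunc.X) (RatFunc.X ^ 2) k *
        qPoch (-RatFunc.X) (RatFunc.X ^ 2) (n - k) * RatFunc.X ^ (n - k) /
      ((1 - RatFunc.X ^ (2 * n)) * qPoch (RatFunc.X ^ 2) (RatFunc.X ^ 2) (n - k) *
        qPoch (RatFunc.X ^ 2) (RatFunc.X ^ 2) (k - 1)) :=
  key_induction_lemma_triangular_general n k hk1 hk
end

section
/- For every integer n ≥ 0, the finite identity 1 + 2 ∑_{j=1}^{n} (-1)^j q^{j²} = ∑_{j=0}^{n} (-1)^j (-1;q)_j (q;q)_n q^{(n+1)j} / ((q;q)_j (-q;q)_n) holds as an identity of rational functions in q. -/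
/-!
Clearing the denominator `(-q;q)_n`, the right-hand side becomes the polynomial sum
`S_n = ∑_{j ≤ n} T_{n,j}` with `T_{n,j} = (-1)^j (-1;q)_j (q^(j+1);q)_(n-j) q^((n+1)j)`, and the
claim becomes `S_n = (1 + 2 ∑_{j=1}^n (-1)^j q^(j²)) (-q;q)_n`, an identity in any commutative ring.
Both sides satisfy `S_(n+1) = (1 + q^(n+1)) S_n + 2 (-1)^(n+1) q^((n+1)²) (-q;q)_(n+1)`: for the
sum this follows from `T_(n+1,j) = (1 - q^(n+1)) q^j T_(n,j)`, after which the difference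
`∑_j (q^j (1 - q^(n+1)) - (1 + q^(n+1))) T_(n,j)` telescopes because
`(1 - q^(j+1)) T_(n,j+1) = -(1 + q^j) q^(n+1) T_(n,j)`.
-/

open Finset

section CommRing

variable {R : Type*} [CommRing R]

def qPochhammer (a q : R) (m : ℕ) : R := ∏ i ∈ range m, (1 - a * q ^ i)

lemma qPochhammer_succ (a q : R) (m : ℕ) :
    qPochhammer a q (m + 1) = qPochhammer a q m * (1 - a * q ^ m) :=
  prod_range_succ _ _

lemma qPochhammer_succ' (a q : R) (m : ℕ) :
    qPochhammer a q (m + 1) = (1 - a) * qPochhammer (a * q) q m := by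
  simp only [qPochhammer, prod_range_succ', pow_zero, mul_one, mul_assoc, ← pow_succ']
  ring

/-- `(q^(j+1); q)_(n-j)`, written as a product over `Ico j n` to avoid truncated subtraction. -/
def qPochhammerIco (q : R) (j n : ℕ) : R := ∏ i ∈ Ico j n, (1 - q ^ (i + 1))

lemma qPochhammer_mul_qPochhammerIco (q : R) {j n : ℕ} (h : j ≤ n) :
    qPochhammer q q j * qPochhammerIco q j n = qPochhammer q q n := by
  simp only [qPochhammer, qPochhammerIco, ← pow_succ']
  exact prod_range_mul_prod_Ico _ h

lemma qPochhammerIco_self (q : R) (n : ℕ) : qPochhammerIco q n n = 1 := by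
  simp [qPochhammerIco]

lemma qPochhammerIco_eq_mul_succ (q : R) {j n : ℕ} (h : j < n) :
    qPochhammerIco q j n = (1 - q ^ (j + 1)) * qPochhammerIco q (j + 1) n :=
  prod_eq_prod_Ico_succ_bot h _

lemma qPochhammerIco_succ (q : R) {j n : ℕ} (h : j ≤ n) :
    qPochhammerIco q j (n + 1) = qPochhammerIco q j n * (1 - q ^ (n + 1)) :=
  prod_Ico_succ_top h _

/-- The `j`-th summand of the right-hand side, multiplied by `(-q;q)_n`. -/
def gaussTerm (q : R) (n j : ℕ) : R :=
  (-1) ^ j * qPochhammer (-1) q j * qPochhammerIco q j n * q ^ ((n + 1) * j)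

lemma gaussTerm_succ_left (q : R) {n j : ℕ} (h : j ≤ n) :
    gaussTerm q (n + 1) j = (1 - q ^ (n + 1)) * q ^ j * gaussTerm q n j := by
  rw [gaussTerm, gaussTerm, qPochhammerIco_succ q h, add_right_comm, add_mul, one_mul, pow_add]
  ring

lemma one_sub_pow_mul_gaussTerm_succ (q : R) {n j : ℕ} (h : j < n) :
    (1 - q ^ (j + 1)) * gaussTerm q n (j + 1) = -((1 + q ^ j) * q ^ (n + 1) * gaussTerm q n j) := by
  rw [gaussTerm, gaussTerm, qPochhammer_succ, qPochhammerIco_eq_mul_succ q h, mul_add, mul_one,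
    pow_add]
  ring

lemma gaussTerm_self (q : R) (n : ℕ) :
    gaussTerm q n n = (-1) ^ n * qPochhammer (-1) q n * q ^ ((n + 1) * n) := by
  rw [gaussTerm, qPochhammerIco_self, mul_one]

lemma sum_range_mul_gaussTerm (q : R) (n : ℕ) :
    ∑ j ∈ range (n + 1), (q ^ j * (1 - q ^ (n + 1)) - (1 + q ^ (n + 1))) * gaussTerm q n j =
      -((1 + q ^ n) * q ^ (n + 1) * gaussTerm q n n) := by
  have hsplit : ∀ j, (q ^ j * (1 - q ^ (n + 1)) - (1 + q ^ (n + 1))) * gaussTerm q n j =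
      -((1 + q ^ j) * q ^ (n + 1) * gaussTerm q n j) - (1 - q ^ j) * gaussTerm q n j := fun j => by
    ring
  have hshift : ∑ j ∈ range (n + 1), (1 - q ^ j) * gaussTerm q n j =
      -∑ j ∈ range n, (1 + q ^ j) * q ^ (n + 1) * gaussTerm q n j := by
    rw [sum_range_succ', pow_zero, sub_self, zero_mul, add_zero, ← sum_neg_distrib]
    exact sum_congr rfl fun j hj => one_sub_pow_mul_gaussTerm_succ q (mem_range.mp hj)
  simp only [hsplit, sum_sub_distrib, hshift, sum_neg_distrib, sum_range_succ]
  ring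

def gaussPartialSum (q : R) (n : ℕ) : R := 1 + 2 * ∑ j ∈ Icc 1 n, (-1) ^ j * q ^ (j ^ 2)

lemma gaussPartialSum_succ (q : R) (n : ℕ) :
    gaussPartialSum q (n + 1) = gaussPartialSum q n + 2 * ((-1) ^ (n + 1) * q ^ ((n + 1) ^ 2)) := by
  rw [gaussPartialSum, gaussPartialSum, sum_Icc_succ_top (by omega)]
  ring

lemma qPochhammer_neg_one_succ (q : R) (n : ℕ) :
    qPochhammer (-1) q (n + 1) = 2 * qPochhammer (-q) q n := by
  rw [qPochhammer_succ', neg_one_mul]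
  ring

theorem sum_range_gaussTerm (q : R) (n : ℕ) :
    ∑ j ∈ range (n + 1), gaussTerm q n j = gaussPartialSum q n * qPochhammer (-q) q n := by
  induction n with
  | zero => simp [gaussTerm, gaussPartialSum, qPochhammer, qPochhammerIco]
  | succ n ih =>
    have htel := sum_range_mul_gaussTerm q n
    simp only [sub_mul, sum_sub_distrib, ← mul_sum] at htel
    have hpoch : qPochhammer (-1) q n * (1 + q ^ n) = 2 * qPochhammer (-q) q n := by
      rw [← qPochhammer_neg_one_succ, qPochhammer_succ, neg_one_mul, sub_neg_eq_add]
    calc ∑ j ∈ range (n + 2), gaussTerm q (n + 1) j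
        = ∑ j ∈ range (n + 1), q ^ j * (1 - q ^ (n + 1)) * gaussTerm q n j
            + gaussTerm q (n + 1) (n + 1) := by
          rw [sum_range_succ]
          congr 1
          refine sum_congr rfl fun j hj => ?_
          rw [gaussTerm_succ_left q (mem_range_succ_iff.mp hj)]
          ring
      _ = gaussPartialSum q (n + 1) * qPochhammer (-q) q (n + 1) := by
          rw [ih, gaussTerm_self] at htel
          rw [gaussTerm_self, gaussPartialSum_succ, qPochhammer_succ (-1), qPochhammer_succ (-q)]
          linear_combination htel + (-1) ^ (n + 1) * q ^ ((n + 1) ^ 2) * (1 + q ^ (n + 1)) * hpoch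

end CommRing

section Field

variable {K : Type*} [Field K]

theorem sum_range_div_eq_gaussPartialSum (q : K) (n : ℕ) (hq : qPochhammer q q n ≠ 0)
    (hnegq : qPochhammer (-q) q n ≠ 0) :
    ∑ j ∈ range (n + 1), (-1) ^ j * qPochhammer (-1) q j * qPochhammer q q n * q ^ ((n + 1) * j) /
        (qPochhammer q q j * qPochhammer (-q) q n) = gaussPartialSum q n := by
  have hterm : ∀ j ∈ range (n + 1),
      (-1) ^ j * qPochhammer (-1) q j * qPochhammer q q n * q ^ ((n + 1) * j) /
        (qPochhammer q q j * qPochhammer (-q) q n) = gaussTerm q n j / qPochhammer (-q) q n := by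
    intro j hj
    have hjn := mem_range_succ_iff.mp hj
    rw [← qPochhammer_mul_qPochhammerIco q hjn] at hq ⊢
    rw [div_eq_div_iff (mul_ne_zero (left_ne_zero_of_mul hq) hnegq) hnegq, gaussTerm]
    ring
  rw [sum_congr rfl hterm, ← sum_div, sum_range_gaussTerm, mul_div_cancel_right₀ _ hnegq]

lemma RatFunc.one_sub_C_mul_X_pow_succ_ne_zero (c : K) (k : ℕ) :
    (1 - RatFunc.C c * RatFunc.X ^ (k + 1) : RatFunc K) ≠ 0 := by
  have hp : (1 - Polynomial.C c * Polynomial.X ^ (k + 1) : Polynomial K) ≠ 0 := fun h => by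
    simpa using congrArg (Polynomial.coeff · 0) h
  simpa using RatFunc.algebraMap_ne_zero hp

lemma qPochhammer_C_mul_X_ne_zero (c : K) (m : ℕ) :
    qPochhammer (RatFunc.C c * RatFunc.X) (RatFunc.X : RatFunc K) m ≠ 0 :=
  prod_ne_zero_iff.mpr fun i _ => by
    rw [mul_assoc, ← pow_succ']
    exact RatFunc.one_sub_C_mul_X_pow_succ_ne_zero c i

end Field

theorem gauss_finite_form (n : ℕ) :
    1 + 2 * ∑ j ∈ Finset.Icc 1 n, (-1 : RatFunc ℚ) ^ j * RatFunc.X ^ (j ^ 2) =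
    ∑ j ∈ Finset.range (n + 1), (-1 : RatFunc ℚ) ^ j *
      qPoch (-1) RatFunc.X j * qPoch RatFunc.X RatFunc.X n * RatFunc.X ^ ((n + 1) * j) /
        (qPoch RatFunc.X RatFunc.X j * qPoch (-RatFunc.X) RatFunc.X n) := by
  have hX : qPochhammer (RatFunc.X : RatFunc ℚ) RatFunc.X n ≠ 0 := by
    simpa using qPochhammer_C_mul_X_ne_zero (1 : ℚ) n
  have hnegX : qPochhammer (-RatFunc.X : RatFunc ℚ) RatFunc.X n ≠ 0 := by
    simpa using qPochhammer_C_mul_X_ne_zero (-1 : ℚ) n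
  -- `qPoch` is `qPochhammer` on `RatFunc ℚ` by definition
  exact (sum_range_div_eq_gaussPartialSum _ n hX hnegX).symm
end
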